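/- arXiv:1410.8213 — 7 statements merged into one kernel-verified Lean document; each statement's English description precedes it below -/
import Mathlib

section
/- Let $M \geq 4$ and let $I \subseteq \{-M, \dots, M\}$ be a finite set. Construct a partial injection (a set of arrows) on $I$ greedily: repeatedly, among all pairs $(k,\ell)$ with $k$ not yet a source, $\ell$ not yet a target, and $4 \leq k - \ell \leq M$, choose the pair with $k$ maximal and then $\ell$ maximal, and add the arrow $k \to \ell$; stop when no such pair exists. Then the set $B = \{k \in I : k > 0,\ k \text{ is not a source of any arrow}\}$ has at most 4 elements. -/
/-- The pair in `s` with maximal first coordinate, and then maximal second coordinate. -/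
noncomputable def greedyPick (s : Finset (ℤ × ℤ)) : ℤ × ℤ :=
  let k := ((s.image Prod.fst).max).getD 0
  (k, (((s.filter fun p => p.1 = k).image Prod.snd).max).getD 0)

/-- Candidate arrows `(k, ℓ)`: `k` not yet a source, `ℓ` not yet a target,
and `4 ≤ k - ℓ ≤ M`. -/
noncomputable def greedyCand (M : ℤ) (I : Finset ℤ) (A : Finset (ℤ × ℤ)) : Finset (ℤ × ℤ) :=
  (I ×ˢ I).filter fun p =>
    p.1 ∉ A.image Prod.fst ∧ p.2 ∉ A.image Prod.snd ∧ 4 ≤ p.1 - p.2 ∧ p.1 - p.2 ≤ M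

/-- One step of the greedy construction: add the candidate arrow with maximal source and then
maximal target, if any candidate exists. -/
noncomputable def greedyStep (M : ℤ) (I : Finset ℤ) (A : Finset (ℤ × ℤ)) : Finset (ℤ × ℤ) :=
  if (greedyCand M I A).Nonempty then insert (greedyPick (greedyCand M I A)) A else A

/-- The set of arrows produced by the greedy process (it stabilizes after at most `I.card`
steps, since sources of distinct arrows are distinct elements of `I`). -/
noncomputable def greedyArrows (M : ℤ) (I : Finset ℤ) : Finset (ℤ × ℤ) :=
  (greedyStep M I)^[I.card] ∅

namespace Stmt2Aux

/-- The greedy pick belongs to `s` and is lexicographically (fst, then snd) maximal. -/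
lemma pick_spec {s : Finset (ℤ × ℤ)} (hs : s.Nonempty) :
    greedyPick s ∈ s ∧ (∀ p ∈ s, p.1 ≤ (greedyPick s).1) ∧
      ∀ p ∈ s, p.1 = (greedyPick s).1 → p.2 ≤ (greedyPick s).2 := by
  have h1 : (s.image Prod.fst).Nonempty := hs.image _
  have hk : ((s.image Prod.fst).max).getD 0 = (s.image Prod.fst).max' h1 := by
    rw [← Finset.coe_max' h1]; rfl
  have hpick : greedyPick s = (((s.image Prod.fst).max).getD 0,
      (((s.filter fun p => p.1 = ((s.image Prod.fst).max).getD 0).image Prod.snd).max).getD 0) :=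
    rfl
  set k : ℤ := ((s.image Prod.fst).max).getD 0 with hkdef
  have hkmem : k ∈ s.image Prod.fst := by rw [hk]; exact Finset.max'_mem _ _
  obtain ⟨p₀, hp₀s, hp₀⟩ := Finset.mem_image.1 hkmem
  have h2 : (s.filter fun p => p.1 = k).Nonempty := ⟨p₀, Finset.mem_filter.2 ⟨hp₀s, hp₀⟩⟩
  have h3 : ((s.filter fun p => p.1 = k).image Prod.snd).Nonempty := h2.image _
  have hl : (((s.filter fun p => p.1 = k).image Prod.snd).max).getD 0
      = ((s.filter fun p => p.1 = k).image Prod.snd).max' h3 := by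
    rw [← Finset.coe_max' h3]; rfl
  set l : ℤ := (((s.filter fun p => p.1 = k).image Prod.snd).max).getD 0 with hldef
  have hlmem : l ∈ (s.filter fun p => p.1 = k).image Prod.snd := by
    rw [hl]; exact Finset.max'_mem _ _
  obtain ⟨q₀, hq₀, hq₀l⟩ := Finset.mem_image.1 hlmem
  have hq₀s : q₀ ∈ s := (Finset.mem_filter.1 hq₀).1
  have hq₀k : q₀.1 = k := (Finset.mem_filter.1 hq₀).2
  have hq₀eq : q₀ = (k, l) := Prod.ext hq₀k hq₀l
  refine ⟨?_, ?_, ?_⟩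
  · rw [hpick]; exact hq₀eq ▸ hq₀s
  · intro p hp
    rw [hpick]
    show p.1 ≤ k
    rw [hk]
    exact Finset.le_max' _ _ (Finset.mem_image_of_mem _ hp)
  · intro p hp hpk
    rw [hpick] at hpk ⊢
    show p.2 ≤ l
    rw [hl]
    exact Finset.le_max' _ _
      (Finset.mem_image_of_mem _ (Finset.mem_filter.2 ⟨hp, hpk⟩))

lemma mem_cand {M : ℤ} {I : Finset ℤ} {A : Finset (ℤ × ℤ)} {p : ℤ × ℤ} :
    p ∈ greedyCand M I A ↔ p.1 ∈ I ∧ p.2 ∈ I ∧ p.1 ∉ A.image Prod.fst ∧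
      p.2 ∉ A.image Prod.snd ∧ 4 ≤ p.1 - p.2 ∧ p.1 - p.2 ≤ M := by
  unfold greedyCand
  rw [Finset.mem_filter, Finset.mem_product]
  tauto

/-- The invariant maintained by the greedy process. -/
def Inv (M : ℤ) (I : Finset ℤ) (A : Finset (ℤ × ℤ)) : Prop :=
  (∀ p ∈ A, p.1 ∈ I ∧ p.2 ∈ I ∧ 4 ≤ p.1 - p.2 ∧ p.1 - p.2 ≤ M) ∧
  (∀ p ∈ A, ∀ q ∈ A, p.1 = q.1 → p = q) ∧
  (∀ p ∈ A, ∀ q ∈ A, p.2 = q.2 → p = q) ∧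
  (∀ k ∈ I, k ∉ A.image Prod.fst → ∀ p ∈ A, 4 ≤ k - p.2 → k - p.2 ≤ M → k < p.1) ∧
  (∀ p ∈ A, ∀ u ∈ I, u ∉ A.image Prod.snd → 4 ≤ p.1 - u → p.1 - u ≤ M → u ≤ p.2) ∧
  (∀ p ∈ A, ∀ q ∈ A, 4 ≤ p.1 - q.2 → p.1 - q.2 ≤ M → p.2 < q.2 → p.1 < q.1)

lemma inv_empty (M : ℤ) (I : Finset ℤ) : Inv M I ∅ := by
  refine ⟨?_, ?_, ?_, ?_, ?_, ?_⟩ <;> simp [Inv]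

lemma inv_step {M : ℤ} {I : Finset ℤ} {A : Finset (ℤ × ℤ)} (h : Inv M I A) :
    Inv M I (greedyStep M I A) := by
  unfold greedyStep
  split_ifs with hne
  swap
  · exact h
  obtain ⟨hmem, hmax1, hmax2⟩ := pick_spec hne
  set P := greedyPick (greedyCand M I A) with hP
  obtain ⟨hPI1, hPI2, hPns, hPnt, hP4, hPM⟩ := mem_cand.1 hmem
  obtain ⟨i1, i2, i3, a1, a2, a3⟩ := h
  have hPnotA : P ∉ A := fun hPA => hPns (Finset.mem_image_of_mem _ hPA)
  refine ⟨?_, ?_, ?_, ?_, ?_, ?_⟩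
  · intro p hp
    rcases Finset.mem_insert.1 hp with rfl | hp
    · exact ⟨hPI1, hPI2, hP4, hPM⟩
    · exact i1 p hp
  · intro p hp q hq hpq
    rcases Finset.mem_insert.1 hp with rfl | hp <;> rcases Finset.mem_insert.1 hq with rfl | hq
    · rfl
    · exact absurd (hpq ▸ Finset.mem_image_of_mem Prod.fst hq) hPns
    · exact absurd (hpq ▸ Finset.mem_image_of_mem Prod.fst hp) (hpq ▸ hPns)
    · exact i2 p hp q hq hpq
  · intro p hp q hq hpq
    rcases Finset.mem_insert.1 hp with rfl | hp <;> rcases Finset.mem_insert.1 hq with rfl | hq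
    · rfl
    · exact absurd (hpq ▸ Finset.mem_image_of_mem Prod.snd hq) hPnt
    · exact absurd (hpq ▸ Finset.mem_image_of_mem Prod.snd hp) (hpq ▸ hPnt)
    · exact i3 p hp q hq hpq
  · -- A1
    intro k hk hkns p hp h4 hM
    have hkns' : k ∉ A.image Prod.fst := fun hc => hkns (by
      rw [Finset.image_insert]; exact Finset.mem_insert_of_mem hc)
    have hkP : k ≠ P.1 := fun hc => hkns (by
      rw [Finset.image_insert]; exact hc ▸ Finset.mem_insert_self _ _)
    rcases Finset.mem_insert.1 hp with rfl | hp
    · -- p = P : show (k, P.2) is a candidate, hence k ≤ P.1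
      have hcand : ((k, P.2) : ℤ × ℤ) ∈ greedyCand M I A :=
        mem_cand.2 ⟨hk, hPI2, hkns', hPnt, h4, hM⟩
      exact lt_of_le_of_ne (hmax1 _ hcand) hkP
    · exact a1 k hk hkns' p hp h4 hM
  · -- A2
    intro p hp u hu hunt h4 hM
    have hunt' : u ∉ A.image Prod.snd := fun hc => hunt (by
      rw [Finset.image_insert]; exact Finset.mem_insert_of_mem hc)
    rcases Finset.mem_insert.1 hp with rfl | hp
    · have hcand : ((P.1, u) : ℤ × ℤ) ∈ greedyCand M I A :=
        mem_cand.2 ⟨hPI1, hu, hPns, hunt', h4, hM⟩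
      exact hmax2 _ hcand rfl
    · exact a2 p hp u hu hunt' h4 hM
  · -- A3
    intro p hp q hq h4 hM hlt
    rcases Finset.mem_insert.1 hp with rfl | hp <;> rcases Finset.mem_insert.1 hq with rfl | hq
    · exact absurd hlt (lt_irrefl _)
    · exact a1 P.1 hPI1 hPns q hq h4 hM
    · exact absurd (a2 p hp P.2 hPI2 hPnt h4 hM) (not_le.2 hlt)
    · exact a3 p hp q hq h4 hM hlt

lemma inv_iter (M : ℤ) (I : Finset ℤ) (n : ℕ) : Inv M I ((greedyStep M I)^[n] ∅) := by
  induction n with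
  | zero => exact inv_empty M I
  | succ n ih => rw [Function.iterate_succ_apply']; exact inv_step ih

lemma cand_or_card (M : ℤ) (I : Finset ℤ) (n : ℕ) :
    greedyCand M I ((greedyStep M I)^[n] ∅) = ∅ ∨ ((greedyStep M I)^[n] ∅).card = n := by
  induction n with
  | zero => right; simp
  | succ n ih =>
    rw [Function.iterate_succ_apply']
    set A := (greedyStep M I)^[n] ∅ with hA
    by_cases hne : (greedyCand M I A).Nonempty
    · rcases ih with hc | hcard
      · exact absurd hne (by rw [hc]; exact Finset.not_nonempty_empty)
      · right
        obtain ⟨hmem, -, -⟩ := pick_spec hne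
        have hPns := (mem_cand.1 hmem).2.2.1
        have hPnotA : greedyPick (greedyCand M I A) ∉ A :=
          fun hc => hPns (Finset.mem_image_of_mem _ hc)
        rw [greedyStep, if_pos hne, Finset.card_insert_of_notMem hPnotA, hcard]
    · left
      rw [greedyStep, if_neg hne]
      exact Finset.not_nonempty_iff_eq_empty.1 hne

lemma cand_final (M : ℤ) (I : Finset ℤ) : greedyCand M I (greedyArrows M I) = ∅ := by
  rcases cand_or_card M I I.card with hc | hcard
  · exact hc
  · obtain ⟨i1, i2, -, -, -, -⟩ := inv_iter M I I.card
    have hinj : Set.InjOn Prod.fst ((greedyStep M I)^[I.card] ∅ : Finset (ℤ × ℤ)) :=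
      fun p hp q hq hpq => i2 p hp q hq hpq
    have hcard2 : (((greedyStep M I)^[I.card] ∅).image Prod.fst).card = I.card := by
      rw [Finset.card_image_of_injOn hinj, hcard]
    have hsub : ((greedyStep M I)^[I.card] ∅).image Prod.fst ⊆ I := by
      intro x hx
      obtain ⟨p, hp, rfl⟩ := Finset.mem_image.1 hx
      exact (i1 p hp).1
    have heq : ((greedyStep M I)^[I.card] ∅).image Prod.fst = I :=
      Finset.eq_of_subset_of_card_le hsub (le_of_eq hcard2.symm)
    rw [Finset.eq_empty_iff_forall_notMem]
    intro p hp
    obtain ⟨hp1, -, hpns, -, -, -⟩ := mem_cand.1 hp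
    unfold greedyArrows at hpns
    rw [heq] at hpns
    exact hpns hp1

/-- The final-state greedy property (P). -/
lemma finalP (M : ℤ) (I : Finset ℤ) {k u : ℤ} (hk : k ∈ I) (hu : u ∈ I)
    (h4 : 4 ≤ k - u) (hMe : k - u ≤ M)
    (hcase : k ∉ (greedyArrows M I).image Prod.fst ∨
      ∃ p ∈ greedyArrows M I, p.1 = k ∧ p.2 < u) :
    ∃ q ∈ greedyArrows M I, q.2 = u ∧ k < q.1 := by
  have hcand := cand_final M I
  obtain ⟨i1, i2, i3, a1, a2, a3⟩ := inv_iter M I I.card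
  have hut : u ∈ (greedyArrows M I).image Prod.snd := by
    by_contra hunt
    rcases hcase with hns | ⟨p, hp, hp1, hp2⟩
    · have : ((k, u) : ℤ × ℤ) ∈ greedyCand M I (greedyArrows M I) :=
        mem_cand.2 ⟨hk, hu, hns, hunt, h4, hMe⟩
      rw [hcand] at this
      exact absurd this (Finset.notMem_empty _)
    · have := a2 p hp u hu hunt (by rw [hp1]; exact h4) (by rw [hp1]; exact hMe)
      omega
  obtain ⟨q, hq, hq2⟩ := Finset.mem_image.1 hut
  refine ⟨q, hq, hq2, ?_⟩
  rcases hcase with hns | ⟨p, hp, hp1, hp2⟩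
  · exact a1 k hk hns q hq (by rw [hq2]; exact h4) (by rw [hq2]; exact hMe)
  · have := a3 p hp q hq (by rw [hp1, hq2]; exact h4) (by rw [hp1, hq2]; exact hMe)
      (by rw [hq2]; omega)
    omega

/-- Key lemma: if `u ∈ I` is positive and at least 3 elements of `I` lie strictly between
`u` and `b ∈ I`, then `b` is a source and its target is at least `u`. -/
lemma keyL (M : ℤ) (I : Finset ℤ) (hI : ∀ k ∈ I, -M ≤ k ∧ k ≤ M) :
    ∀ n : ℕ, ∀ b ∈ I, M - b ≤ (n : ℤ) → ∀ u ∈ I, 0 < u →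
      3 ≤ (I.filter fun x => u < x ∧ x < b).card →
      ∃ p ∈ greedyArrows M I, p.1 = b ∧ u ≤ p.2 := by
  intro n
  induction n using Nat.strong_induction_on with
  | _ n ih =>
  intro b hb hbn u hu hu0 hcard
  have hbM : b ≤ M := (hI b hb).2
  have hsubIoo : (I.filter fun x => u < x ∧ x < b) ⊆ Finset.Ioo u b := by
    intro x hx
    exact Finset.mem_Ioo.2 (Finset.mem_filter.1 hx).2
  have hIoo := Finset.card_le_card hsubIoo
  rw [Int.card_Ioo] at hIoo
  have h4 : 4 ≤ b - u := by omega
  have hMe : b - u ≤ M := by omega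
  by_contra hgoal
  push_neg at hgoal
  have hcase : b ∉ (greedyArrows M I).image Prod.fst ∨
      ∃ p ∈ greedyArrows M I, p.1 = b ∧ p.2 < u := by
    by_cases hbs : b ∈ (greedyArrows M I).image Prod.fst
    · right
      obtain ⟨p, hp, hp1⟩ := Finset.mem_image.1 hbs
      exact ⟨p, hp, hp1, hgoal p hp hp1⟩
    · left; exact hbs
  obtain ⟨q, hq, hq2, hbq⟩ := finalP M I hb hu h4 hMe hcase
  obtain ⟨i1, i2, -, -, -, -⟩ := inv_iter M I I.card
  have hqI : q.1 ∈ I := (i1 q hq).1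
  have hqM : q.1 ≤ M := (hI _ hqI).2
  have hne : (I.filter fun x => u < x ∧ x < b).Nonempty := Finset.card_pos.1 (by omega)
  set s : Finset ℤ := I.filter fun x => u < x ∧ x < b with hs
  have hu's : s.min' hne ∈ s := Finset.min'_mem _ _
  set u' : ℤ := s.min' hne with hu'
  obtain ⟨hu'I, huu', hu'b⟩ : u' ∈ I ∧ u < u' ∧ u' < b := by
    have := Finset.mem_filter.1 hu's
    exact ⟨this.1, this.2.1, this.2.2⟩
  have hbns : b ∉ s.erase u' := by
    intro hbe
    have := (Finset.mem_filter.1 (Finset.mem_erase.1 hbe).2).2.2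
    omega
  have hsub2 : insert b (s.erase u') ⊆ I.filter fun x => u' < x ∧ x < q.1 := by
    intro x hx
    rcases Finset.mem_insert.1 hx with rfl | hx
    · exact Finset.mem_filter.2 ⟨hb, hu'b, hbq⟩
    · obtain ⟨hxne, hxs⟩ := Finset.mem_erase.1 hx
      obtain ⟨hxI, hux, hxb⟩ := Finset.mem_filter.1 hxs
      have := Finset.min'_le s x hxs
      exact Finset.mem_filter.2 ⟨hxI, by omega, by omega⟩
  have hcard2 : 3 ≤ (I.filter fun x => u' < x ∧ x < q.1).card := by
    have h1 := Finset.card_le_card hsub2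
    rw [Finset.card_insert_of_notMem hbns, Finset.card_erase_of_mem hu's] at h1
    omega
  obtain ⟨p, hp, hp1, hp2⟩ := ih (M - q.1).toNat (by omega) q.1 hqI (by omega) u' hu'I
    (by omega) hcard2
  have hpq : p = q := i2 p hp q hq (by rw [hp1])
  rw [hpq, hq2] at hp2
  omega

lemma inv_final (M : ℤ) (I : Finset ℤ) : Inv M I (greedyArrows M I) := inv_iter M I I.card

end Stmt2Aux

/-- At most 4 positive elements of `I` fail to be a source of a greedy arrow. -/
theorem stmt_2 (M : ℤ) (hM : 4 ≤ M) (I : Finset ℤ) (hI : ∀ k ∈ I, -M ≤ k ∧ k ≤ M) :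
    (I.filter fun k => 0 < k ∧ k ∉ (greedyArrows M I).image Prod.fst).card ≤ 4 := by
  classical
  have key : ∀ b ∈ I, 0 < b → b ∉ (greedyArrows M I).image Prod.fst →
      (I.filter fun x => 0 < x ∧ x < b).card ≤ 3 := by
    intro b hb hb0 hbns
    by_contra hc
    push_neg at hc
    have hne : (I.filter fun x => 0 < x ∧ x < b).Nonempty := Finset.card_pos.1 (by omega)
    set s : Finset ℤ := I.filter fun x => 0 < x ∧ x < b with hs
    have hus : s.min' hne ∈ s := Finset.min'_mem _ _
    set u : ℤ := s.min' hne with hu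
    obtain ⟨huI, hu0, hub⟩ : u ∈ I ∧ 0 < u ∧ u < b := by
      have := Finset.mem_filter.1 hus
      exact ⟨this.1, this.2.1, this.2.2⟩
    have hsub : s.erase u ⊆ I.filter fun x => u < x ∧ x < b := by
      intro x hx
      obtain ⟨hxne, hxs⟩ := Finset.mem_erase.1 hx
      obtain ⟨hxI, hx0, hxb⟩ := Finset.mem_filter.1 hxs
      have := Finset.min'_le s x hxs
      exact Finset.mem_filter.2 ⟨hxI, by omega, by omega⟩
    have hcard : 3 ≤ (I.filter fun x => u < x ∧ x < b).card := by
      have h1 := Finset.card_le_card hsub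
      rw [Finset.card_erase_of_mem hus] at h1
      omega
    obtain ⟨p, hp, hp1, -⟩ := Stmt2Aux.keyL M I hI (M - b).toNat b hb (by omega) u huI hu0 hcard
    exact hbns (Finset.mem_image.2 ⟨p, hp, hp1⟩)
  have hmono : ∀ b ∈ I, 0 < b → ∀ b' : ℤ, b < b' →
      (I.filter fun x => 0 < x ∧ x < b).card < (I.filter fun x => 0 < x ∧ x < b').card := by
    intro b hb hb0 b' hbb'
    apply Finset.card_lt_card
    rw [Finset.ssubset_iff_of_subset]
    · exact ⟨b, Finset.mem_filter.2 ⟨hb, hb0, hbb'⟩, fun hc => by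
        have := (Finset.mem_filter.1 hc).2.2
        omega⟩
    · intro x hx
      obtain ⟨hxI, hx0, hxb⟩ := Finset.mem_filter.1 hx
      exact Finset.mem_filter.2 ⟨hxI, hx0, by omega⟩
  have hmaps : ∀ b ∈ I.filter fun k => 0 < k ∧ k ∉ (greedyArrows M I).image Prod.fst,
      (I.filter fun x => 0 < x ∧ x < b).card ∈ Finset.range 4 := by
    intro b hb
    obtain ⟨hbI, hb0, hbns⟩ := Finset.mem_filter.1 hb
    exact Finset.mem_range.2 (by have := key b hbI hb0 hbns; omega)
  have hinj : Set.InjOn (fun b => (I.filter fun x => 0 < x ∧ x < b).card)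
      ((I.filter fun k => 0 < k ∧ k ∉ (greedyArrows M I).image Prod.fst) : Finset ℤ) := by
    intro b hb b' hb' heq
    simp only [Finset.coe_filter, Set.mem_setOf_eq] at hb hb'
    have heq' : (I.filter fun x => 0 < x ∧ x < b).card
        = (I.filter fun x => 0 < x ∧ x < b').card := heq
    by_contra hne
    rcases lt_or_gt_of_ne hne with h | h
    · have := hmono b hb.1 hb.2.1 b' h
      omega
    · have := hmono b' hb'.1 hb'.2.1 b h
      omega
  have := Finset.card_le_card_of_injOn _ hmaps hinj
  simpa using this
end

section
/- Let $M \geq 4$ and let $I \subseteq \{-M, \dots, M\}$ be a finite set. Construct arrows on $I$ by the greedy rule: repeatedly, among all pairs $(k,\ell)$ with $k$ not yet a source, $\ell$ not yet a target, and $4 \leq k - \ell \leq M$, choose the pair with $k$ maximal and then $\ell$ maximal and add the arrow $k \to \ell$, stopping when no such pair exists. Then the set $B' = \{k \in I : k < 0,\ k \text{ is not a target of any arrow}\}$ has at most 4 elements. -/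
lemma greedyPick_spec {s : Finset (ℤ × ℤ)} (hs : s.Nonempty) :
    greedyPick s ∈ s ∧ ∀ p ∈ s, p.1 ≤ (greedyPick s).1 ∧
      (p.1 = (greedyPick s).1 → p.2 ≤ (greedyPick s).2) := by
  obtain ⟨m, hm⟩ := Finset.max_of_nonempty (hs.image Prod.fst)
  obtain ⟨p0, hp0s, hp0⟩ := Finset.mem_image.mp (Finset.mem_of_max hm)
  have hfne : (s.filter fun p => p.1 = m).Nonempty :=
    ⟨p0, Finset.mem_filter.mpr ⟨hp0s, hp0⟩⟩
  obtain ⟨m2, hm2⟩ := Finset.max_of_nonempty (hfne.image Prod.snd)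
  have hpick : greedyPick s = (m, m2) := by
    simp only [greedyPick, hm]
    rw [show Option.getD ((m : WithBot ℤ)) 0 = m from rfl]
    rw [hm2]
    rfl
  obtain ⟨q, hqf, hq2⟩ := Finset.mem_image.mp (Finset.mem_of_max hm2)
  obtain ⟨hqs, hq1⟩ := Finset.mem_filter.mp hqf
  refine ⟨?_, ?_⟩
  · rw [hpick]
    have : q = (m, m2) := Prod.ext hq1 hq2
    rwa [← this]
  · intro p hp
    rw [hpick]
    constructor
    · have := Finset.le_max (Finset.mem_image_of_mem Prod.fst hp)
      rw [hm] at this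
      exact_mod_cast this
    · intro h1
      have hpf : p ∈ s.filter fun p => p.1 = m := Finset.mem_filter.mpr ⟨hp, h1⟩
      have := Finset.le_max (Finset.mem_image_of_mem Prod.snd hpf)
      rw [hm2] at this
      exact_mod_cast this

def GInv (M : ℤ) (I : Finset ℤ) (A : Finset (ℤ × ℤ)) : Prop :=
  (∀ p ∈ A, p.1 ∈ I ∧ p.2 ∈ I ∧ 4 ≤ p.1 - p.2 ∧ p.1 - p.2 ≤ M) ∧
  (∀ p ∈ A, ∀ q ∈ A, p.1 = q.1 → p = q) ∧
  (∀ p ∈ A, ∀ q ∈ A, p.2 = q.2 → p = q) ∧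
  (∀ p ∈ A, ∀ l ∈ I, l ∉ A.image Prod.snd → 4 ≤ p.1 - l → p.1 - l ≤ M → l ≤ p.2)

lemma mem_cand {M : ℤ} {I : Finset ℤ} {A : Finset (ℤ × ℤ)} {p : ℤ × ℤ} :
    p ∈ greedyCand M I A ↔ p.1 ∈ I ∧ p.2 ∈ I ∧ p.1 ∉ A.image Prod.fst ∧
      p.2 ∉ A.image Prod.snd ∧ 4 ≤ p.1 - p.2 ∧ p.1 - p.2 ≤ M := by
  simp only [greedyCand, Finset.mem_filter, Finset.mem_product]
  tauto

lemma inv_step {M : ℤ} {I : Finset ℤ} {A : Finset (ℤ × ℤ)} (h : GInv M I A) :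
    GInv M I (greedyStep M I A) ∧
      (greedyCand M I A = ∅ ∨ (greedyStep M I A).card = A.card + 1) := by
  by_cases hne : (greedyCand M I A).Nonempty
  · have hstep : greedyStep M I A = insert (greedyPick (greedyCand M I A)) A := if_pos hne
    obtain ⟨hqmem, hqmax⟩ := greedyPick_spec hne
    set q := greedyPick (greedyCand M I A) with hq
    obtain ⟨hq1I, hq2I, hq1f, hq2f, hb1, hb2⟩ := mem_cand.mp hqmem
    obtain ⟨h1, h2, h3, h4⟩ := h
    have hqA : q ∉ A := fun hx => hq1f (Finset.mem_image_of_mem Prod.fst hx)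
    constructor
    · rw [hstep]
      refine ⟨?_, ?_, ?_, ?_⟩
      · intro p hp
        rcases Finset.mem_insert.mp hp with rfl | hp
        · exact ⟨hq1I, hq2I, hb1, hb2⟩
        · exact h1 p hp
      · intro p hp p' hp' he
        rcases Finset.mem_insert.mp hp with rfl | hp <;>
          rcases Finset.mem_insert.mp hp' with rfl | hp'
        · rfl
        · exact absurd (he ▸ Finset.mem_image_of_mem Prod.fst hp') hq1f
        · exact absurd (he ▸ Finset.mem_image_of_mem Prod.fst hp) hq1f
        · exact h2 p hp p' hp' he
      · intro p hp p' hp' he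
        rcases Finset.mem_insert.mp hp with rfl | hp <;>
          rcases Finset.mem_insert.mp hp' with rfl | hp'
        · rfl
        · exact absurd (he ▸ Finset.mem_image_of_mem Prod.snd hp') hq2f
        · exact absurd (he ▸ Finset.mem_image_of_mem Prod.snd hp) hq2f
        · exact h3 p hp p' hp' he
      · intro p hp l hlI hl hl4 hlM
        have hlA : l ∉ A.image Prod.snd := by
          intro hx
          exact hl (Finset.image_subset_image (Finset.subset_insert q A) hx)
        rcases Finset.mem_insert.mp hp with rfl | hp
        · have hcand : ((q.1, l) : ℤ × ℤ) ∈ greedyCand M I A :=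
            mem_cand.mpr ⟨hq1I, hlI, hq1f, hlA, hl4, hlM⟩
          exact (hqmax _ hcand).2 rfl
        · exact h4 p hp l hlI hlA hl4 hlM
    · right
      rw [hstep, Finset.card_insert_of_notMem hqA]
  · have hstep : greedyStep M I A = A := if_neg hne
    rw [hstep]
    exact ⟨h, Or.inl (Finset.not_nonempty_iff_eq_empty.mp hne)⟩

lemma inv_iter (M : ℤ) (I : Finset ℤ) (n : ℕ) :
    GInv M I ((greedyStep M I)^[n] ∅) ∧
      (greedyCand M I ((greedyStep M I)^[n] ∅) = ∅ ∨ ((greedyStep M I)^[n] ∅).card = n) := by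
  induction n with
  | zero =>
    refine ⟨⟨?_, ?_, ?_, ?_⟩, Or.inr rfl⟩ <;> simp
  | succ n ih =>
    obtain ⟨hinv, hor⟩ := ih
    rw [Function.iterate_succ_apply']
    obtain ⟨hinv', hor'⟩ := inv_step hinv
    refine ⟨hinv', ?_⟩
    rcases hor' with h | h
    · left
      rw [greedyStep, if_neg (by rw [h]; exact Finset.not_nonempty_empty), h]
    · rcases hor with h0 | h0
      · left
        have : greedyStep M I ((greedyStep M I)^[n] ∅) = (greedyStep M I)^[n] ∅ := by
          rw [greedyStep, if_neg (by rw [h0]; exact Finset.not_nonempty_empty)]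
        rw [this]
        exact h0
      · right
        rw [h, h0]

lemma cand_final (M : ℤ) (I : Finset ℤ) :
    GInv M I (greedyArrows M I) ∧ greedyCand M I (greedyArrows M I) = ∅ := by
  obtain ⟨hinv, hor⟩ := inv_iter M I I.card
  rw [show (greedyStep M I)^[I.card] ∅ = greedyArrows M I from rfl] at hinv hor
  refine ⟨hinv, ?_⟩
  rcases hor with h | h
  · exact h
  · -- card = I.card, so all of I are sources, cand empty
    set A := greedyArrows M I
    have hsubI : A.image Prod.fst ⊆ I := by
      intro x hx
      obtain ⟨p, hp, rfl⟩ := Finset.mem_image.mp hx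
      exact (hinv.1 p hp).1
    have hinj : (A.image Prod.fst).card = A.card := by
      apply Finset.card_image_of_injOn
      intro p hp p' hp' he
      exact hinv.2.1 p hp p' hp' he
    have heq : A.image Prod.fst = I :=
      Finset.eq_of_subset_of_card_le hsubI (by rw [hinj, h])
    rw [Finset.eq_empty_iff_forall_notMem]
    intro p hp
    obtain ⟨hp1, _, hp1f, _⟩ := mem_cand.mp hp
    exact hp1f (heq ▸ hp1)

/-- At most 4 negative elements of `I` fail to be a target of a greedy arrow. -/
theorem stmt_3 (M : ℤ) (hM : 4 ≤ M) (I : Finset ℤ) (hI : ∀ k ∈ I, -M ≤ k ∧ k ≤ M) :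
    (I.filter fun k => k < 0 ∧ k ∉ (greedyArrows M I).image Prod.snd).card ≤ 4 := by
  obtain ⟨⟨h1, h2, h3, h4⟩, hcand⟩ := cand_final M I
  set A := greedyArrows M I with hA
  set B := I.filter fun k => k < 0 ∧ k ∉ A.image Prod.snd with hB
  by_contra hcard
  push_neg at hcard
  have hBne : B.Nonempty := Finset.card_pos.mp (by omega)
  set l := B.min' hBne with hl
  have hlB : l ∈ B := B.min'_mem hBne
  obtain ⟨hlI, hlneg, hlt⟩ : l ∈ I ∧ l < 0 ∧ l ∉ A.image Prod.snd := by
    simpa [hB] using hlB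
  have hlM : -M ≤ l := (hI l hlI).1
  have hsource : ∀ k ∈ I, l + 4 ≤ k → k ≤ l + M → k ∈ A.image Prod.fst := by
    intro k hk h4' hM'
    by_contra hk'
    have : ((k, l) : ℤ × ℤ) ∈ greedyCand M I A :=
      mem_cand.mpr ⟨hk, hlI, hk', hlt, by omega, by omega⟩
    rw [hcand] at this
    exact absurd this (Finset.notMem_empty _)
  set S0 := I.filter fun k => l + 4 ≤ k ∧ k ≤ l + M with hS0
  set W := I.filter fun x => l + 1 ≤ x ∧ x ≤ l + M with hW
  set Sm := I.filter fun x => l + 1 ≤ x ∧ x ≤ l + 3 with hSm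
  set F := A.filter fun p => l + 4 ≤ p.1 ∧ p.1 ≤ l + M with hF
  set T := F.image Prod.snd with hT
  have hFfst : F.image Prod.fst = S0 := by
    apply Finset.Subset.antisymm
    · intro x hx
      obtain ⟨p, hp, rfl⟩ := Finset.mem_image.mp hx
      obtain ⟨hpA, hb⟩ := Finset.mem_filter.mp hp
      exact Finset.mem_filter.mpr ⟨(h1 p hpA).1, hb⟩
    · intro k hk
      obtain ⟨hkI, hk4, hkM⟩ := Finset.mem_filter.mp hk
      obtain ⟨p, hp, rfl⟩ := Finset.mem_image.mp (hsource k hkI hk4 hkM)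
      exact Finset.mem_image_of_mem _ (Finset.mem_filter.mpr ⟨hp, hk4, hkM⟩)
  have hTcard : T.card = S0.card := by
    rw [hT, ← hFfst]
    rw [Finset.card_image_of_injOn, Finset.card_image_of_injOn]
    · intro p hp p' hp' he
      exact h2 p (Finset.filter_subset _ _ hp) p' (Finset.filter_subset _ _ hp') he
    · intro p hp p' hp' he
      exact h3 p (Finset.filter_subset _ _ hp) p' (Finset.filter_subset _ _ hp') he
  have hTW : T ⊆ W := by
    intro x hx
    obtain ⟨p, hp, rfl⟩ := Finset.mem_image.mp hx
    obtain ⟨hpA, hp4, hpM⟩ := Finset.mem_filter.mp hp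
    obtain ⟨_, hp2I, hd4, hdM⟩ := h1 p hpA
    have hge : l ≤ p.2 := h4 p hpA l hlI hlt (by omega) (by omega)
    have hne : p.2 ≠ l := by
      intro he; exact hlt (he ▸ Finset.mem_image_of_mem Prod.snd hpA)
    exact Finset.mem_filter.mpr ⟨hp2I, by omega, by omega⟩
  have hWdec : W.card = S0.card + Sm.card := by
    rw [← Finset.card_union_of_disjoint]
    · congr 1
      ext x
      simp only [hW, hS0, hSm, Finset.mem_union, Finset.mem_filter]
      constructor
      · rintro ⟨hx, h1', h2'⟩
        by_cases hc : l + 4 ≤ x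
        · exact Or.inl ⟨hx, hc, h2'⟩
        · exact Or.inr ⟨hx, h1', by omega⟩
      · rintro (⟨hx, ha, hb⟩ | ⟨hx, ha, hb⟩) <;> exact ⟨hx, by omega, by omega⟩
    · rw [Finset.disjoint_left]
      intro x hx hx'
      obtain ⟨_, ha, _⟩ := Finset.mem_filter.mp hx
      obtain ⟨_, _, hb⟩ := Finset.mem_filter.mp hx'
      omega
  have hSm3 : Sm.card ≤ 3 := by
    calc Sm.card ≤ (Finset.Icc (l+1) (l+3)).card := by
          apply Finset.card_le_card
          intro x hx
          obtain ⟨_, ha, hb⟩ := Finset.mem_filter.mp hx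
          exact Finset.mem_Icc.mpr ⟨ha, hb⟩
      _ = 3 := by rw [Int.card_Icc]; simp
  have hBsub : B.erase l ⊆ W \ T := by
    intro b hb
    obtain ⟨hbne, hbB⟩ := Finset.mem_erase.mp hb
    obtain ⟨hbI, hbneg, hbt⟩ : b ∈ I ∧ b < 0 ∧ b ∉ A.image Prod.snd := by
      simpa [hB] using hbB
    have hble : l ≤ b := B.min'_le b hbB
    refine Finset.mem_sdiff.mpr ⟨Finset.mem_filter.mpr ⟨hbI, by omega, by omega⟩, ?_⟩
    intro hx
    apply hbt
    obtain ⟨p, hp, rfl⟩ := Finset.mem_image.mp hx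
    exact Finset.mem_image_of_mem _ (Finset.filter_subset _ _ hp)
  have hle : (B.erase l).card ≤ (W \ T).card := Finset.card_le_card hBsub
  rw [Finset.card_erase_of_mem hlB, Finset.card_sdiff_of_subset hTW] at hle
  omega
end

section
/- Let $A$ be a C*-algebra and $(h_n)$ a sequence of self-adjoint elements of $A$. Define $G = \{(x,y) \in A \times A : \exists (x_n) \text{ in } A,\ x_n \to x \text{ and } i[h_n, x_n] \to y\}$ and $D = \{x : \exists y,\ (x,y) \in G\}$. If $D$ is dense in $A$, then $I = \{y \in A : (0,y) \in G\}$ is a closed two-sided ideal of $A$. -/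
open Filter Metric

/-- The graph limit of the inner derivations `ad(i h_n)`. -/
def graphLimit {A : Type*} [CStarAlgebra A] (h : ℕ → A) : Set (A × A) :=
  {p | ∃ x : ℕ → A, Tendsto x atTop (nhds p.1) ∧
    Tendsto (fun n => Complex.I • (h n * x n - x n * h n)) atTop (nhds p.2)}

section Aux
variable {A : Type*} [CStarAlgebra A] (h : ℕ → A)

private noncomputable def del (n : ℕ) (a : A) : A := Complex.I • (h n * a - a * h n)

private lemma del_add (n : ℕ) (a b : A) : del h n (a + b) = del h n a + del h n b := by
  simp only [del, mul_add, add_mul, ← smul_add]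
  congr 1; abel

private lemma del_smul (n : ℕ) (c : ℂ) (a : A) : del h n (c • a) = c • del h n a := by
  simp only [del, mul_smul_comm, smul_mul_assoc, ← smul_sub]
  rw [smul_comm]

private lemma del_mul (n : ℕ) (a b : A) :
    del h n (a * b) = del h n a * b + a * del h n b := by
  simp only [del, smul_mul_assoc, mul_smul_comm, ← smul_add]
  congr 1
  noncomm_ring

private lemma mem_gl {x y : A} (a : ℕ → A) (h1 : Tendsto a atTop (nhds x))
    (h2 : Tendsto (fun n => del h n (a n)) atTop (nhds y)) : (x, y) ∈ graphLimit h :=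
  ⟨a, h1, h2⟩

private lemma gl_spec {x y : A} (hxy : (x, y) ∈ graphLimit h) :
    ∃ a : ℕ → A, Tendsto a atTop (nhds x) ∧
      Tendsto (fun n => del h n (a n)) atTop (nhds y) := hxy

/-- Characterization via infDist to graphs. -/
private lemma mem_gl_iff (p : A × A) :
    p ∈ graphLimit h ↔
      Tendsto (fun n => infDist p (Set.range fun a : A => (a, del h n a))) atTop (nhds 0) := by
  constructor
  · rintro ⟨a, h1, h2⟩
    have key : ∀ n, infDist p (Set.range fun a : A => (a, del h n a)) ≤
        dist p (a n, del h n (a n)) := fun n =>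
      infDist_le_dist_of_mem ⟨a n, rfl⟩
    have hd : Tendsto (fun n => dist p (a n, del h n (a n))) atTop (nhds 0) := by
      have : Tendsto (fun n => ((a n, del h n (a n)) : A × A)) atTop (nhds p) := by
        rw [← Prod.mk.eta (p := p)]
        exact h1.prodMk_nhds h2
      simpa [dist_comm] using tendsto_iff_dist_tendsto_zero.mp this
    exact squeeze_zero (fun n => infDist_nonneg) key hd
  · intro hinf
    have hne : ∀ n, (Set.range fun a : A => (a, del h n a)).Nonempty :=
      fun n => ⟨(0, del h n 0), 0, rfl⟩
    have hch : ∀ n, ∃ a : A, dist p (a, del h n a) <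
        infDist p (Set.range fun a : A => (a, del h n a)) + 1 / (n + 1) := by
      intro n
      have : infDist p (Set.range fun a : A => (a, del h n a)) <
          infDist p (Set.range fun a : A => (a, del h n a)) + 1 / (n + 1) := by
        have : (0:ℝ) < 1 / (n + 1) := by positivity
        linarith
      obtain ⟨q, ⟨a, rfl⟩, hq⟩ := (infDist_lt_iff (hne n)).mp this
      exact ⟨a, hq⟩
    choose a ha using hch
    have hbound : Tendsto (fun n => infDist p (Set.range fun a : A => (a, del h n a))
        + 1 / (n + 1 : ℝ)) atTop (nhds 0) := by
      have h2 : Tendsto (fun n : ℕ => 1 / (n + 1 : ℝ)) atTop (nhds 0) :=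
        tendsto_one_div_add_atTop_nhds_zero_nat
      simpa using hinf.add h2
    have hdist : Tendsto (fun n => dist p (a n, del h n (a n))) atTop (nhds 0) :=
      squeeze_zero (fun n => dist_nonneg) (fun n => (ha n).le) hbound
    refine ⟨a, ?_, ?_⟩
    · refine tendsto_iff_dist_tendsto_zero.mpr (squeeze_zero (fun n => dist_nonneg) ?_ hdist)
      intro n
      calc dist (a n) p.1 = dist (p.1) ((a n, del h n (a n)) : A × A).1 := by rw [dist_comm]
        _ ≤ dist p (a n, del h n (a n)) := by rw [Prod.dist_eq]; exact le_max_left _ _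
    · refine tendsto_iff_dist_tendsto_zero.mpr (squeeze_zero (fun n => dist_nonneg) ?_ hdist)
      intro n
      calc dist (del h n (a n)) p.2
          = dist (p.2) ((a n, del h n (a n)) : A × A).2 := by rw [dist_comm]
        _ ≤ dist p (a n, del h n (a n)) := by rw [Prod.dist_eq]; exact le_max_right _ _

private lemma gl_closed : IsClosed (graphLimit h) := by
  rw [← isSeqClosed_iff_isClosed]
  intro pk p hpk hlim
  rw [mem_gl_iff]
  rw [NormedAddCommGroup.tendsto_nhds_zero]
  intro ε hε
  obtain ⟨k, hk⟩ := (Metric.tendsto_atTop.mp hlim (ε / 2) (by linarith)) |>.imp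
    (fun k hk => hk k le_rfl)
  have hk' : dist (pk k) p < ε / 2 := hk
  have := (mem_gl_iff h (pk k)).mp (hpk k)
  rw [NormedAddCommGroup.tendsto_nhds_zero] at this
  filter_upwards [this (ε / 2) (by linarith)] with n hn
  have hlip : infDist p (Set.range fun a : A => (a, del h n a)) ≤
      infDist (pk k) (Set.range fun a : A => (a, del h n a)) + dist p (pk k) :=
    infDist_le_infDist_add_dist
  have h1 : infDist (pk k) (Set.range fun a : A => (a, del h n a)) < ε / 2 := by
    have := hn
    rwa [Real.norm_eq_abs, abs_of_nonneg infDist_nonneg] at this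
  have h2 : dist p (pk k) < ε / 2 := by rwa [dist_comm]
  rw [Real.norm_eq_abs, abs_of_nonneg infDist_nonneg]
  linarith

end Aux

/-- If the domain of the graph limit of `ad(i h_n)` is dense, then
`I = {y | (0, y) ∈ G}` is a closed two-sided ideal. -/
theorem stmt_6 {A : Type*} [CStarAlgebra A] (h : ℕ → A)
    (hsa : ∀ n, IsSelfAdjoint (h n))
    (hD : Dense {x : A | ∃ y : A, (x, y) ∈ graphLimit h}) :
    IsClosed {y : A | ((0 : A), y) ∈ graphLimit h} ∧
    (∀ y ∈ {y : A | ((0 : A), y) ∈ graphLimit h}, ∀ z ∈ {y : A | ((0 : A), y) ∈ graphLimit h},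
      y + z ∈ {y : A | ((0 : A), y) ∈ graphLimit h}) ∧
    (∀ (c : ℂ), ∀ y ∈ {y : A | ((0 : A), y) ∈ graphLimit h},
      c • y ∈ {y : A | ((0 : A), y) ∈ graphLimit h}) ∧
    (∀ (x : A), ∀ y ∈ {y : A | ((0 : A), y) ∈ graphLimit h},
      x * y ∈ {y : A | ((0 : A), y) ∈ graphLimit h} ∧
      y * x ∈ {y : A | ((0 : A), y) ∈ graphLimit h}) := by
  set I : Set A := {y : A | ((0 : A), y) ∈ graphLimit h} with hI
  have hIclosed : IsClosed I := by
    have : I = (fun y : A => ((0 : A), y)) ⁻¹' graphLimit h := rfl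
    rw [this]
    exact (gl_closed h).preimage (continuous_const.prodMk continuous_id)
  refine ⟨hIclosed, ?_, ?_, ?_⟩
  · -- additivity
    rintro y hy z hz
    obtain ⟨a, ha1, ha2⟩ := gl_spec h hy
    obtain ⟨b, hb1, hb2⟩ := gl_spec h hz
    refine mem_gl h (fun n => a n + b n) (by simpa using ha1.add hb1) ?_
    simp only [del_add]
    simpa using ha2.add hb2
  · -- smul
    rintro c y hy
    obtain ⟨a, ha1, ha2⟩ := gl_spec h hy
    refine mem_gl h (fun n => c • a n) (by simpa using ha1.const_smul c) ?_
    simp only [del_smul]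
    exact ha2.const_smul c
  · -- ideal property
    have key : ∀ x ∈ {x : A | ∃ y : A, (x, y) ∈ graphLimit h}, ∀ y ∈ I,
        x * y ∈ I ∧ y * x ∈ I := by
      rintro x ⟨w, hxw⟩ y hy
      obtain ⟨a, ha1, ha2⟩ := gl_spec h hxw
      obtain ⟨b, hb1, hb2⟩ := gl_spec h hy
      constructor
      · refine mem_gl h (fun n => a n * b n) (by simpa using ha1.mul hb1) ?_
        simp only [del_mul]
        simpa using (ha2.mul hb1).add (ha1.mul hb2)
      · refine mem_gl h (fun n => b n * a n) (by simpa using hb1.mul ha1) ?_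
        simp only [del_mul]
        simpa using (hb2.mul ha1).add (hb1.mul ha2)
    intro x y hy
    have hsub : {x : A | ∃ y : A, (x, y) ∈ graphLimit h} ⊆
        {x : A | x * y ∈ I ∧ y * x ∈ I} := fun x hx => key x hx y hy
    have hclosed : IsClosed {x : A | x * y ∈ I ∧ y * x ∈ I} := by
      exact (hIclosed.preimage (continuous_mul_right y)).inter
        (hIclosed.preimage (continuous_mul_left y))
    have hdense : Dense {x : A | x * y ∈ I ∧ y * x ∈ I} := hD.mono hsub
    have : {x : A | x * y ∈ I ∧ y * x ∈ I} = Set.univ := by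
      rw [← hclosed.closure_eq, hdense.closure_eq]
    exact (this ▸ Set.mem_univ x : x ∈ {x : A | x * y ∈ I ∧ y * x ∈ I})
end

section
/- Let $A$ be a C*-algebra and $(h_n)$ a sequence of self-adjoint elements of $A$. Define $G = \{(x,y) \in A \times A : \exists (x_n),\ x_n \to x,\ i[h_n,x_n] \to y\}$ and suppose $D = \{x : \exists y,\ (x,y) \in G\}$ is dense in $A$. Then $(0, a) \in G$ implies $a = 0$; consequently $G$ is the graph of a closed densely defined derivation $\delta$ on $A$. -/
open Filter

/-!
For `b = i h_n` the automorphisms `α_s y = exp(s b) y exp(-s b)` are isometric and are generated by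
`δ_n = ad b`. Averaging `α_s` over `s ∈ [0, t]` turns `δ_n x_n` into `α_t x_n - x_n`, which tends
to `0` when `x_n → 0`; hence `(0, a) ∈ G` and `(z, w) ∈ G` give `t ‖z‖ ≤ t ‖z + a‖ + t² ‖w‖`.
Letting `t → 0`, `‖z‖ ≤ ‖z + a‖` on the dense domain of `G`, hence everywhere, and `z = -a`
forces `a = 0`. `G` is closed because the limits of sequences `p_n ∈ S_n`, for any sets `S_n`,
form a closed set.
-/

open Topology Metric NormedSpace

section LowerLimit
variable {X : Type*} [PseudoMetricSpace X]

lemma exists_tendsto_of_tendsto_infDist {S : ℕ → Set X} (hS : ∀ n, (S n).Nonempty) {p : X}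
    (hp : Tendsto (fun n => infDist p (S n)) atTop (𝓝 0)) :
    ∃ x : ℕ → X, (∀ n, x n ∈ S n) ∧ Tendsto x atTop (𝓝 p) := by
  have hlt : ∀ n, infDist p (S n) < infDist p (S n) + 1 / (n + 1) := fun n => by
    simp only [lt_add_iff_pos_right]; positivity
  choose x hxS hx using fun n => (infDist_lt_iff (hS n)).1 (hlt n)
  refine ⟨x, hxS, tendsto_iff_dist_tendsto_zero.2 <| squeeze_zero (fun _ => dist_nonneg)
    (fun n => (dist_comm _ _).trans_le (hx n).le) ?_⟩
  simpa using hp.add tendsto_one_div_add_atTop_nhds_zero_nat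

lemma isClosed_setOf_exists_tendsto {S : ℕ → Set X} (hS : ∀ n, (S n).Nonempty) :
    IsClosed {p : X | ∃ x : ℕ → X, (∀ n, x n ∈ S n) ∧ Tendsto x atTop (𝓝 p)} := by
  refine isClosed_of_closure_subset fun p hp => exists_tendsto_of_tendsto_infDist hS ?_
  refine tendsto_order.2 ⟨fun ε hε => Eventually.of_forall fun n => hε.trans_le infDist_nonneg,
    fun ε hε => ?_⟩
  obtain ⟨q, ⟨x, hxS, hxq⟩, hpq⟩ := mem_closure_iff.1 hp (ε / 2) (half_pos hε)
  filter_upwards [(tendsto_order.1 (tendsto_iff_dist_tendsto_zero.1 hxq)).2 _ (half_pos hε)]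
    with n hn
  calc infDist p (S n) ≤ dist p (x n) := infDist_le_dist_of_mem (hxS n)
    _ ≤ dist p q + dist (x n) q := by rw [dist_comm (x n)]; exact dist_triangle _ _ _
    _ < ε := by linarith

end LowerLimit

section ConjExp
variable {A : Type*} [CStarAlgebra A]

/- The one-parameter automorphism group generated by the inner derivation `y ↦ b * y - y * b`. -/
noncomputable def conjExp (b : A) (s : ℝ) (y : A) : A := exp (s • b) * y * exp (s • -b)

lemma conjExp_zero (b y : A) : conjExp b 0 y = y := by
  simp [conjExp]

lemma conjExp_add (b : A) (s : ℝ) (y z : A) :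
    conjExp b s (y + z) = conjExp b s y + conjExp b s z := by
  simp only [conjExp, mul_add, add_mul]

lemma norm_conjExp {b : A} (hb : b ∈ skewAdjoint A) (s : ℝ) (y : A) :
    ‖conjExp b s y‖ = ‖y‖ := by
  let +nondep : NormedAlgebra ℚ A := .restrictScalars ℚ ℂ A
  rw [conjExp, CStarRing.norm_mul_mem_unitary, CStarRing.norm_mem_unitary_mul]
  · exact exp_mem_unitary_of_mem_skewAdjoint (skewAdjoint.smul_mem s hb)
  · exact exp_mem_unitary_of_mem_skewAdjoint (skewAdjoint.smul_mem s (neg_mem hb))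

lemma hasDerivAt_conjExp (b y : A) (s : ℝ) :
    HasDerivAt (fun s => conjExp b s y) (conjExp b s (b * y - y * b)) s := by
  let +nondep : NormedAlgebra ℚ A := .restrictScalars ℚ ℂ A
  have hcomm : Commute b (exp (s • -b)) := ((Commute.refl b).neg_right.smul_right s).exp_right
  refine (((hasDerivAt_exp_smul_const b s).mul_const y).mul
    (hasDerivAt_exp_smul_const (-b) s)).congr_deriv ?_
  rw [conjExp, mul_neg, ← hcomm.eq]
  noncomm_ring

lemma continuous_conjExp (b y : A) : Continuous fun s => conjExp b s y :=
  continuous_iff_continuousAt.2 fun s => (hasDerivAt_conjExp b y s).continuousAt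

lemma integral_conjExp_commutator (b x : A) (t : ℝ) :
    ∫ s in 0..t, conjExp b s (b * x - x * b) = conjExp b t x - x := by
  rw [intervalIntegral.integral_eq_sub_of_hasDerivAt (fun s _ => hasDerivAt_conjExp b x s)
    ((continuous_conjExp b _).intervalIntegrable 0 t), conjExp_zero]

lemma norm_conjExp_sub_le {b : A} (hb : b ∈ skewAdjoint A) (y : A) {s : ℝ} (hs : 0 ≤ s) :
    ‖conjExp b s y - y‖ ≤ s * ‖b * y - y * b‖ := by
  simpa [conjExp_zero, mul_comm] using norm_image_sub_le_of_norm_deriv_le_segment'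
    (fun σ _ => (hasDerivAt_conjExp b y σ).hasDerivWithinAt)
    (fun σ _ => (norm_conjExp hb σ _).le) s (Set.right_mem_Icc.2 hs)

/- Average the isometries `conjExp b s` over `s ∈ [0, t]`: the average of `b * x - x * b`
telescopes to `conjExp b t x - x`, while the average of `y` is `t • y` up to
`t ^ 2 ‖b * y - y * b‖`. -/
lemma mul_norm_le_norm_add_commutator {b : A} (hb : b ∈ skewAdjoint A) (x y : A) {t : ℝ}
    (ht : 0 ≤ t) :
    t * ‖y‖ ≤ t * ‖y + (b * x - x * b)‖ + t ^ 2 * ‖b * y - y * b‖ + 2 * ‖x‖ := by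
  set I : A → A := fun y => ∫ s in 0..t, conjExp b s y
  have hI : ∀ y, IntervalIntegrable (fun s => conjExp b s y) MeasureTheory.volume 0 t :=
    fun y => (continuous_conjExp b y).intervalIntegrable 0 t
  have norm_I : ∀ y, ‖I y‖ ≤ t * ‖y‖ := fun y => by
    simpa [abs_of_nonneg ht, mul_comm] using
      intervalIntegral.norm_integral_le_of_norm_le_const (a := 0) (b := t)
        (fun s _ => (norm_conjExp hb s y).le)
  have norm_sub_I : ‖t • y - I y‖ ≤ t ^ 2 * ‖b * y - y * b‖ := by
    have hbound : ∀ s ∈ Set.uIoc 0 t, ‖conjExp b s y - y‖ ≤ t * ‖b * y - y * b‖ := by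
      intro s hs
      rw [Set.uIoc_of_le ht] at hs
      exact (norm_conjExp_sub_le hb y hs.1.le).trans (by gcongr; exact hs.2)
    have := intervalIntegral.norm_integral_le_of_norm_le_const hbound
    rw [intervalIntegral.integral_sub (hI y) intervalIntegrable_const,
      intervalIntegral.integral_const, sub_zero] at this
    simpa [norm_sub_rev, abs_of_nonneg ht, sq, mul_assoc, mul_comm, mul_left_comm] using this
  have norm_I_le : ‖I y‖ ≤ t * ‖y + (b * x - x * b)‖ + 2 * ‖x‖ := by
    have split : I y = I (y + (b * x - x * b)) - (conjExp b t x - x) := by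
      rw [← integral_conjExp_commutator, eq_sub_iff_add_eq,
        ← intervalIntegral.integral_add (hI _) (hI _)]
      simp only [I, conjExp_add]
    have norm_conjExp_sub : ‖conjExp b t x - x‖ ≤ 2 * ‖x‖ := by
      linarith [norm_sub_le (conjExp b t x) x, norm_conjExp hb t x]
    calc ‖I y‖ ≤ ‖I (y + (b * x - x * b))‖ + ‖conjExp b t x - x‖ := split ▸ norm_sub_le _ _
      _ ≤ _ := add_le_add (norm_I _) norm_conjExp_sub
  calc t * ‖y‖ = ‖t • y‖ := by rw [norm_smul, Real.norm_of_nonneg ht]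
    _ ≤ ‖I y‖ + ‖t • y - I y‖ := norm_le_norm_add_norm_sub' _ _
    _ ≤ _ := by linarith

end ConjExp

section GraphLimit
variable {A : Type*} [CStarAlgebra A] {h : ℕ → A}

lemma I_smul_commutator (c y : A) :
    Complex.I • (c * y - y * c) = (Complex.I • c) * y - y * (Complex.I • c) := by
  rw [smul_sub, smul_mul_assoc, mul_smul_comm]

lemma graphLimit_eq_setOf_exists_tendsto (h : ℕ → A) :
    graphLimit h = {p | ∃ q : ℕ → A × A,
      (∀ n, q n ∈ Set.range fun y => (y, Complex.I • (h n * y - y * h n))) ∧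
        Tendsto q atTop (𝓝 p)} := by
  ext p
  constructor
  · rintro ⟨x, hx, hδx⟩
    exact ⟨_, fun n => ⟨x n, rfl⟩, hx.prodMk_nhds hδx⟩
  · rintro ⟨q, hq, hqp⟩
    choose x hx using hq
    refine ⟨x, ?_, ?_⟩ <;> simp only [← funext hx] at hqp
    exacts [(continuous_fst.tendsto p).comp hqp, (continuous_snd.tendsto p).comp hqp]

lemma isClosed_graphLimit (h : ℕ → A) : IsClosed (graphLimit h) := by
  rw [graphLimit_eq_setOf_exists_tendsto]
  exact isClosed_setOf_exists_tendsto fun _ => Set.range_nonempty _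

lemma sub_mem_graphLimit {x₁ y₁ x₂ y₂ : A} (h₁ : (x₁, y₁) ∈ graphLimit h)
    (h₂ : (x₂, y₂) ∈ graphLimit h) : (x₁ - x₂, y₁ - y₂) ∈ graphLimit h := by
  obtain ⟨u, hu, hδu⟩ := h₁
  obtain ⟨v, hv, hδv⟩ := h₂
  refine ⟨u - v, hu.sub hv, (hδu.sub hδv).congr fun n => ?_⟩
  simp only [Pi.sub_apply, ← smul_sub]
  noncomm_ring

lemma mul_mem_graphLimit {x₁ y₁ x₂ y₂ : A} (h₁ : (x₁, y₁) ∈ graphLimit h)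
    (h₂ : (x₂, y₂) ∈ graphLimit h) : (x₁ * x₂, y₁ * x₂ + x₁ * y₂) ∈ graphLimit h := by
  obtain ⟨u, hu, hδu⟩ := h₁
  obtain ⟨v, hv, hδv⟩ := h₂
  refine ⟨u * v, hu.mul hv, ((hδu.mul hv).add (hu.mul hδv)).congr fun n => ?_⟩
  simp only [Pi.mul_apply, smul_mul_assoc, mul_smul_comm, ← smul_add]
  noncomm_ring

lemma mul_norm_le_of_mem_graphLimit (hsa : ∀ n, IsSelfAdjoint (h n)) {a z w : A}
    (ha : (0, a) ∈ graphLimit h) (hz : (z, w) ∈ graphLimit h) {t : ℝ} (ht : 0 ≤ t) :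
    t * ‖z‖ ≤ t * ‖z + a‖ + t ^ 2 * ‖w‖ := by
  obtain ⟨x, hx, hδx⟩ := ha
  obtain ⟨y, hy, hδy⟩ := hz
  simp only [I_smul_commutator] at hδx hδy
  have hb n : Complex.I • h n ∈ skewAdjoint A := (hsa n).smul_mem_skewAdjoint Complex.conj_I
  have hlim := ((hy.add hδx).norm.const_mul t).add (hδy.norm.const_mul (t ^ 2)) |>.add
    (hx.norm.const_mul 2)
  simp only [norm_zero, mul_zero, add_zero] at hlim
  exact le_of_tendsto_of_tendsto' (hy.norm.const_mul t) hlim fun n =>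
    mul_norm_le_norm_add_commutator (hb n) _ _ ht

lemma norm_le_norm_add_of_mem_graphLimit (hsa : ∀ n, IsSelfAdjoint (h n)) {a z w : A}
    (ha : (0, a) ∈ graphLimit h) (hz : (z, w) ∈ graphLimit h) : ‖z‖ ≤ ‖z + a‖ := by
  have hle : ∀ t > 0, ‖z‖ ≤ ‖z + a‖ + t * ‖w‖ := fun t ht => by
    have := mul_norm_le_of_mem_graphLimit hsa ha hz ht.le
    rw [sq, mul_assoc, ← mul_add] at this
    exact le_of_mul_le_mul_left this ht
  have hlim : Tendsto (fun t : ℝ => ‖z + a‖ + t * ‖w‖) (𝓝[>] 0) (𝓝 ‖z + a‖) := by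
    have : Continuous fun t : ℝ => ‖z + a‖ + t * ‖w‖ := by fun_prop
    exact (this.tendsto' 0 _ (by simp)).mono_left nhdsWithin_le_nhds
  exact ge_of_tendsto hlim (eventually_nhdsWithin_of_forall hle)

lemma eq_zero_of_mem_graphLimit (hsa : ∀ n, IsSelfAdjoint (h n))
    (hD : Dense {x : A | ∃ y : A, (x, y) ∈ graphLimit h}) {a : A}
    (ha : (0, a) ∈ graphLimit h) : a = 0 := by
  have hle : ∀ z, ‖z‖ ≤ ‖z + a‖ := by
    have hclosed : IsClosed {z : A | ‖z‖ ≤ ‖z + a‖} := isClosed_le (by fun_prop) (by fun_prop)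
    intro z
    refine hclosed.closure_subset_iff.2 ?_ (hD z)
    rintro x ⟨y, hy⟩
    exact norm_le_norm_add_of_mem_graphLimit hsa ha hy
  simpa using hle (-a)

end GraphLimit

/-- If the domain of the graph limit `G` of `ad(i h_n)` is dense, then `(0, a) ∈ G` implies
`a = 0`; consequently `G` is the graph of a (single-valued) closed derivation. -/
theorem stmt_7 {A : Type*} [CStarAlgebra A] (h : ℕ → A)
    (hsa : ∀ n, IsSelfAdjoint (h n))
    (hD : Dense {x : A | ∃ y : A, (x, y) ∈ graphLimit h}) :
    (∀ a : A, ((0 : A), a) ∈ graphLimit h → a = 0) ∧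
    (∀ x y y' : A, (x, y) ∈ graphLimit h → (x, y') ∈ graphLimit h → y = y') ∧
    IsClosed (graphLimit h) ∧
    (∀ x₁ y₁ x₂ y₂ : A, (x₁, y₁) ∈ graphLimit h → (x₂, y₂) ∈ graphLimit h →
      (x₁ * x₂, y₁ * x₂ + x₁ * y₂) ∈ graphLimit h) := by
  refine ⟨fun a => eq_zero_of_mem_graphLimit hsa hD, fun x y y' hy hy' => ?_,
    isClosed_graphLimit h, fun _ _ _ _ => mul_mem_graphLimit⟩
  have := sub_mem_graphLimit hy hy'
  rw [sub_self] at this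
  exact sub_eq_zero.1 (eq_zero_of_mem_graphLimit hsa hD this)
end

section
/- Let $\delta$ be a derivation on a C*-algebra $A$ which is the graph limit of inner derivations $\mathrm{ad}(i h_n)$ with $h_n$ self-adjoint. Then $\|x + \lambda \delta(x)\| \geq \|x\|$ for all $x \in D(\delta)$ and all $\lambda \in \mathbb{R}$. -/
/-!
For one inner derivation `δ = i[h, ·]` choose a state `f` with `f (x⋆x) = ‖x‖²`. The positive
element `‖x⋆x‖ - x⋆x` is annihilated by `f`, hence by Cauchy–Schwarz lies in the left kernel of
`f`, so `f (x⋆x h) = ‖x‖² f h` is real. Then `f (x⋆(x + λ δ x)) = ‖x‖² + iλ · (real)`, and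
Cauchy–Schwarz for `f` gives `‖x‖² ≤ ‖x‖ ‖x + λ δ x‖`. The inequality passes to the graph limit
by continuity of the norm.
-/

open Filter

open Complex ComplexOrder

lemma Complex.eq_ofReal_of_norm_le_of_le_re {w : ℂ} {r : ℝ} (hw : ‖w‖ ≤ r) (hr : r ≤ w.re) :
    w = r := by
  have hre : w.re = r := le_antisymm ((re_le_norm w).trans hw) hr
  have him : 0 = w.im := (nonneg_iff.mp (re_eq_norm.mp (hre.trans (by linarith [re_le_norm w])))).2
  exact Complex.ext (by rw [hre, ofReal_re]) (by rw [← him, ofReal_im])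

section

variable {A : Type*} [CStarAlgebra A]

lemma IsSelfAdjoint.norm_add_smul_I_sq_le [Nontrivial A] {a : A} (ha : IsSelfAdjoint a) (t : ℝ) :
    ‖a + (t * I) • (1 : A)‖ ^ 2 ≤ ‖a‖ ^ 2 + t ^ 2 := by
  have hstar : star (a + (t * I) • (1 : A)) * (a + (t * I) • (1 : A)) =
      a * a + ((t : ℂ) ^ 2) • 1 := by
    have : star (t * I : ℂ) = - (t * I) := by simp
    simp only [star_add, star_smul, this, ha.star_eq, star_one, add_mul, mul_add, smul_mul_assoc,
      mul_smul_comm, one_mul, mul_one]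
    have hc : (t * I) * -(t * I) = (t : ℂ) ^ 2 := by linear_combination -(t : ℂ) ^ 2 * I_sq
    rw [smul_add, smul_smul, hc, neg_smul]
    abel
  calc ‖a + (t * I) • (1 : A)‖ ^ 2 = ‖a * a + ((t : ℂ) ^ 2) • (1 : A)‖ := by
        rw [sq, ← CStarRing.norm_star_mul_self, hstar]
    _ ≤ ‖a * a‖ + ‖((t : ℂ) ^ 2) • (1 : A)‖ := norm_add_le _ _
    _ ≤ ‖a‖ ^ 2 + t ^ 2 := by
        gcongr
        · exact sq ‖a‖ ▸ norm_mul_le a a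
        · rw [norm_smul, norm_one, mul_one, norm_pow, norm_real, Real.norm_eq_abs, sq_abs]

namespace ContinuousLinearMap

variable {φ : StrongDual ℂ A}

lemma im_apply_eq_zero_of_isSelfAdjoint [Nontrivial A] (hφ : ‖φ‖ ≤ 1) (hφ1 : φ 1 = 1) {a : A}
    (ha : IsSelfAdjoint a) : (φ a).im = 0 := by
  have key (t : ℝ) : 2 * t * (φ a).im ≤ ‖a‖ ^ 2 - ‖φ a‖ ^ 2 := by
    have hle : ‖φ a + t * I‖ ≤ ‖a + (t * I) • (1 : A)‖ := by
      simpa [hφ1] using φ.le_of_opNorm_le hφ (a + (t * I) • (1 : A))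
    have := (pow_le_pow_left₀ (norm_nonneg _) hle 2).trans (ha.norm_add_smul_I_sq_le t)
    rw [Complex.sq_norm, normSq_apply] at this ⊢
    simp only [add_re, add_im, mul_re, mul_im, ofReal_re, ofReal_im, I_re, I_im] at this
    nlinarith
  by_contra him
  set c := ‖a‖ ^ 2 - ‖φ a‖ ^ 2
  have hkey := key ((c + 1) / (2 * (φ a).im))
  have : 2 * ((c + 1) / (2 * (φ a).im)) * (φ a).im = c + 1 := by field_simp
  linarith

variable [PartialOrder A] [StarOrderedRing A]

lemma nonneg_apply_of_nonneg [Nontrivial A] (hφ : ‖φ‖ ≤ 1) (hφ1 : φ 1 = 1) {a : A}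
    (ha : 0 ≤ a) : 0 ≤ φ a := by
  have hsa : IsSelfAdjoint a := .of_nonneg ha
  have hcompl : ‖algebraMap ℝ A ‖a‖ - a‖ ≤ ‖a‖ := calc
    _ ≤ ‖algebraMap ℝ A ‖a‖‖ := CStarAlgebra.norm_le_norm_of_nonneg_of_le
          (sub_nonneg.mpr hsa.le_algebraMap_norm_self) (sub_le_self _ ha)
    _ = ‖a‖ := by rw [norm_algebraMap', norm_norm]
  have : ‖a‖ - (φ a).re ≤ ‖a‖ := calc
    ‖a‖ - (φ a).re = (φ (algebraMap ℝ A ‖a‖ - a)).re := by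
          simp [Algebra.algebraMap_eq_smul_one, hφ1]
    _ ≤ ‖φ (algebraMap ℝ A ‖a‖ - a)‖ := re_le_norm _
    _ ≤ ‖algebraMap ℝ A ‖a‖ - a‖ := φ.le_of_opNorm_le hφ _ |>.trans_eq (one_mul _)
    _ ≤ ‖a‖ := hcompl
  exact nonneg_iff.mpr ⟨by linarith, (im_apply_eq_zero_of_isSelfAdjoint hφ hφ1 hsa).symm⟩

end ContinuousLinearMap

variable [PartialOrder A] [StarOrderedRing A]

lemma exists_positiveLinearMap_apply_one_and_apply_eq_norm [Nontrivial A] {z : A} (hz : 0 ≤ z) :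
    ∃ f : A →ₚ[ℂ] ℂ, f 1 = 1 ∧ f z = ‖z‖ := by
  -- As `1 + ‖z‖ ≤ ‖1 + z‖`, a contraction attaining its norm at `1 + z` attains it at `1` and `z`.
  obtain ⟨φ, hφ, hφv⟩ : ∃ φ : StrongDual ℂ A, ‖φ‖ ≤ 1 ∧ φ (1 + z) = ‖1 + z‖ :=
    exists_dual_vector'' ℂ (1 + z)
  have hv : 1 + ‖z‖ ≤ ‖1 + z‖ := by
    have hmem : ‖z‖ + 1 ∈ spectrum ℝ (algebraMap ℝ A 1 + z) :=
      spectrum.add_mem_add_iff.mpr (CStarAlgebra.norm_mem_spectrum_of_nonneg hz)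
    rw [map_one] at hmem
    simpa [add_comm, abs_of_nonneg (by positivity : (0 : ℝ) ≤ ‖z‖ + 1)]
      using spectrum.norm_le_norm_of_mem hmem
  have h1 : ‖φ 1‖ ≤ 1 := by simpa using φ.le_of_opNorm_le hφ 1
  have hz' : ‖φ z‖ ≤ ‖z‖ := φ.le_of_opNorm_le hφ z |>.trans_eq (one_mul _)
  have hsum : 1 + ‖z‖ ≤ (φ 1).re + (φ z).re := by
    rwa [← add_re, ← map_add, hφv, ofReal_re]
  have hφ1 : φ 1 = 1 := by
    exact_mod_cast eq_ofReal_of_norm_le_of_le_re h1 (by linarith [re_le_norm (φ z)])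
  have hφz : φ z = ‖z‖ := eq_ofReal_of_norm_le_of_le_re hz' (by linarith [re_le_norm (φ 1)])
  exact ⟨.mk₀ φ.toLinearMap fun a ha ↦ φ.nonneg_apply_of_nonneg hφ hφ1 ha, hφ1, hφz⟩

namespace PositiveLinearMap

variable (f : A →ₚ[ℂ] ℂ)

lemma norm_apply_star_mul_le (a b : A) :
    ‖f (star a * b)‖ ≤ ‖f.toPreGNS a‖ * ‖f.toPreGNS b‖ := by
  simpa only [preGNS_inner_def, ofPreGNS_toPreGNS]
    using norm_inner_le_norm (𝕜 := ℂ) (f.toPreGNS a) (f.toPreGNS b)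

lemma norm_toPreGNS_le (hf : f 1 = 1) (b : A) : ‖f.toPreGNS b‖ ≤ ‖b‖ := by
  rw [preGNS_norm_def, Real.sqrt_le_left (norm_nonneg _)]
  calc (f (star b * b)).re ≤ ‖f (star b * b)‖ := re_le_norm _
    _ ≤ ‖f 1‖ * ‖star b * b‖ := f.norm_apply_le_of_nonneg _ (star_mul_self_nonneg b)
    _ = ‖b‖ ^ 2 := by rw [hf, norm_one, one_mul, CStarRing.norm_star_mul_self, sq]

lemma apply_mul_eq_zero_of_apply_eq_zero {w : A} (hw : 0 ≤ w) (hfw : f w = 0) (a : A) :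
    f (w * a) = 0 := by
  obtain ⟨c, rfl⟩ := CStarAlgebra.nonneg_iff_eq_star_mul_self.mp hw
  have hc : ‖f.toPreGNS c‖ = 0 := by
    rw [preGNS_norm_def]
    simp [ofPreGNS_toPreGNS, hfw]
  have := f.norm_apply_star_mul_le c (c * a)
  rwa [hc, zero_mul, ← mul_assoc, norm_le_zero_iff] at this

lemma apply_mul_eq_of_apply_eq_norm (hf : f 1 = 1) {z : A} (hz : 0 ≤ z) (hfz : f z = ‖z‖)
    (a : A) : f (z * a) = ‖z‖ * f a := by
  have hw : 0 ≤ algebraMap ℝ A ‖z‖ - z :=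
    sub_nonneg.mpr (IsSelfAdjoint.of_nonneg hz).le_algebraMap_norm_self
  have hfw : f (algebraMap ℝ A ‖z‖ - z) = 0 := by
    simp [Algebra.algebraMap_eq_smul_one, hf, hfz]
  have := f.apply_mul_eq_zero_of_apply_eq_zero hw hfw a
  rw [sub_mul, map_sub, Algebra.algebraMap_eq_smul_one, smul_mul_assoc, one_mul,
    map_smul_of_tower, sub_eq_zero] at this
  rw [← this, real_smul]

end PositiveLinearMap

lemma norm_le_norm_add_smul_I_commutator {h : A} (hh : IsSelfAdjoint h) (x : A) (lam : ℝ) :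
    ‖x‖ ≤ ‖x + (lam : ℂ) • (I • (h * x - x * h))‖ := by
  rcases eq_or_ne x 0 with rfl | hx
  · simp
  have : Nontrivial A := ⟨⟨x, 0, hx⟩⟩
  set b := x + (lam : ℂ) • (I • (h * x - x * h))
  obtain ⟨f, hf1, hfz⟩ := exists_positiveLinearMap_apply_one_and_apply_eq_norm
    (star_mul_self_nonneg x)
  have hreal {a : A} (ha : IsSelfAdjoint a) : (f a).im = 0 :=
    conj_eq_iff_im.mp (ha.map f).star_eq
  have hre : (f (star x * b)).re = ‖x‖ ^ 2 := by
    have hexp : star x * b =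
        star x * x + (lam * I : ℂ) • (star x * h * x - star x * x * h) := by
      simp only [b, mul_add, mul_smul_comm, mul_sub, smul_smul, mul_assoc]
    rw [hexp, map_add, map_smul, map_sub,
      f.apply_mul_eq_of_apply_eq_norm hf1 (star_mul_self_nonneg x) hfz, hfz]
    have hxhx : IsSelfAdjoint (star x * h * x) := by
      simpa [mul_assoc] using hh.conjugate' x
    simp [hreal hxhx, hreal hh, CStarRing.norm_star_mul_self, sq]
  have hcs : ‖x‖ ^ 2 ≤ ‖x‖ * ‖b‖ := calc
    ‖x‖ ^ 2 = (f (star x * b)).re := hre.symm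
    _ ≤ ‖f (star x * b)‖ := re_le_norm _
    _ ≤ ‖f.toPreGNS x‖ * ‖f.toPreGNS b‖ := f.norm_apply_star_mul_le x b
    _ ≤ ‖x‖ * ‖b‖ := by gcongr <;> exact f.norm_toPreGNS_le hf1 _
  nlinarith [norm_pos_iff.mpr hx]

end

theorem stmt_9_general {A : Type*} [CStarAlgebra A] (h : ℕ → A)
    (hsa : ∀ n, IsSelfAdjoint (h n))
    (x y : A) (hxy : (x, y) ∈ graphLimit h) (lam : ℝ) :
    ‖x‖ ≤ ‖x + (lam : ℂ) • y‖ := by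
  let _ := CStarAlgebra.spectralOrder A
  let _ := CStarAlgebra.spectralOrderedRing A
  obtain ⟨xs, hxs, hδ⟩ := hxy
  exact le_of_tendsto_of_tendsto' hxs.norm (hxs.add (hδ.const_smul _)).norm
    fun n ↦ norm_le_norm_add_smul_I_commutator (hsa n) (xs n) lam

/-- If `δ` is the graph limit of `ad(i h_n)` (with dense domain), then
`‖x + λ δ(x)‖ ≥ ‖x‖` for every `x` in its domain and every real `λ`. -/
theorem stmt_9 {A : Type*} [CStarAlgebra A] (h : ℕ → A)
    (hsa : ∀ n, IsSelfAdjoint (h n))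
    (hD : Dense {x : A | ∃ y : A, (x, y) ∈ graphLimit h})
    (x y : A) (hxy : (x, y) ∈ graphLimit h) (lam : ℝ) :
    ‖x‖ ≤ ‖x + (lam : ℂ) • y‖ :=
  stmt_9_general h hsa x y hxy lam
end

section
/- Let $h, b \in M_n(\mathbb{C})$ with $h, b$ self-adjoint, let $u \in M_n(\mathbb{C})$ be a partial isometry with $[b, uu^*] = 0 = [b, u^*u]$, and let $z$ be a partial isometry with $zz^* = uu^*$ and $z^*z = u^*u$. Suppose $\|z^* b z - z^* z b - (u^* h u - u^* u h)\| < \varepsilon$. Then $|\mathrm{Tr}(h\, u u^* - h\, u^* u)| \leq \varepsilon\, \mathrm{Tr}(u^*u \vee uu^*) + 2\|b\|\, \mathrm{rank}(u^* u \vee u u^*)$. -/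
/-!
Cyclicity of the trace turns `Tr D`, for `D = z*bz - z*zb - (u*hu - u*uh)`, into
`Tr(u*bu) - Tr(ubu*) - Tr(h uu* - h u*u)`. A trace of the form `Tr(X* A X)` is at most
`‖A‖ Tr(X*X)` in absolute value, which bounds the first two terms by `‖b‖ Tr(u*u)`. Since `D`
starts in the range of `u*u ≤ q`, we have `Tr D = Tr(q D q)`, bounded by `‖D‖ Tr q`. Finally the
trace of a projection is its rank, and `rank(u*u) ≤ rank q`.
-/

open scoped Matrix.Norms.L2Operator

theorem star_mul_mul_star_eq_star_of_mul_star_mul_eq {R : Type*} [Semigroup R] [StarMul R] {u : R}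
    (hu : u * star u * u = u) : star u * u * star u = star u := by
  simpa only [star_mul, star_star, mul_assoc] using congrArg star hu

namespace Matrix

open WithLp

theorem trace_eq_rank_of_isIdempotentElem {K n : Type*} [Field K] [Fintype n] [DecidableEq n]
    {q : Matrix n n K} (hq : IsIdempotentElem q) : q.trace = q.rank := by
  have hlin : IsIdempotentElem (toLin' q) := hq.map toLinAlgEquiv'
  rw [rank, ← toLin'_apply', ← (LinearMap.IsIdempotentElem.isProj_range _ hlin).trace,
    trace_toLin'_eq]

variable {𝕜 m n : Type*} [RCLike 𝕜] [Fintype m]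

theorem re_trace_le_rank_of_mul_eq {p q : Matrix m m 𝕜} (hp : IsIdempotentElem p)
    (hqp : q * p = p) : RCLike.re p.trace ≤ q.rank := by
  classical
  rw [trace_eq_rank_of_isIdempotentElem hp, RCLike.natCast_re, Nat.cast_le]
  exact hqp ▸ rank_mul_le_left q p

theorem conjTranspose_mul_mul_apply_self (B : Matrix m n 𝕜) (A : Matrix m m 𝕜) (i : n) :
    (Bᴴ * A * B) i i = inner 𝕜 (toLp 2 (Bᵀ i)) (toLp 2 (A *ᵥ Bᵀ i)) := by
  simp only [EuclideanSpace.inner_toLp_toLp, mul_apply, mulVec, dotProduct, Finset.sum_mul,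
    conjTranspose_apply, transpose_apply, Pi.star_apply]
  rw [Finset.sum_comm]
  simp only [mul_assoc, mul_comm]

variable [Fintype n]

theorem re_trace_conjTranspose_mul_self (B : Matrix m n 𝕜) :
    RCLike.re (Bᴴ * B).trace = ∑ i, ‖toLp 2 (Bᵀ i)‖ ^ 2 := by
  classical
  rw [← Matrix.mul_one Bᴴ, trace, map_sum]
  simp_rw [diag_apply, conjTranspose_mul_mul_apply_self, one_mulVec, inner_self_eq_norm_sq]

variable [DecidableEq m]

theorem norm_trace_conjTranspose_mul_mul_le (B : Matrix m n 𝕜) (A : Matrix m m 𝕜) :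
    ‖(Bᴴ * A * B).trace‖ ≤ ‖A‖ * RCLike.re (Bᴴ * B).trace := by
  rw [re_trace_conjTranspose_mul_self, Finset.mul_sum, trace]
  refine (norm_sum_le _ _).trans (Finset.sum_le_sum fun i _ => ?_)
  rw [diag_apply, conjTranspose_mul_mul_apply_self]
  calc _ ≤ ‖toLp 2 (Bᵀ i)‖ * ‖toLp 2 (A *ᵥ Bᵀ i)‖ := norm_inner_le_norm _ _
    _ ≤ ‖toLp 2 (Bᵀ i)‖ * (‖A‖ * ‖toLp 2 (Bᵀ i)‖) := by
      gcongr; exact A.l2_opNorm_mulVec _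
    _ = ‖A‖ * ‖toLp 2 (Bᵀ i)‖ ^ 2 := by ring

theorem norm_trace_mul_mul_conjTranspose_le (B : Matrix n m 𝕜) (A : Matrix m m 𝕜) :
    ‖(B * A * Bᴴ).trace‖ ≤ ‖A‖ * RCLike.re (Bᴴ * B).trace := by
  simpa only [conjTranspose_conjTranspose, trace_mul_comm B Bᴴ] using
    norm_trace_conjTranspose_mul_mul_le Bᴴ A

theorem norm_trace_le_of_isStarProjection_mul_eq {q D : Matrix m m 𝕜} (hq : IsStarProjection q)
    (hqD : q * D = D) : ‖D.trace‖ ≤ ‖D‖ * RCLike.re q.trace := by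
  have hD : (qᴴ * D * q).trace = D.trace := by
    rw [← star_eq_conjTranspose, hq.isSelfAdjoint.star_eq, trace_mul_cycle,
      hq.isIdempotentElem.eq, hqD]
  have hqq : qᴴ * q = q := by
    rw [← star_eq_conjTranspose, hq.isSelfAdjoint.star_eq, hq.isIdempotentElem.eq]
  simpa only [hD, hqq] using norm_trace_conjTranspose_mul_mul_le q D

end Matrix

theorem stmt_11_general (n : ℕ) (h b u z q : Matrix (Fin n) (Fin n) ℂ)
    (hu : u * star u * u = u)
    (hzz : z * star z * z = z)
    (hz : z * star z = u * star u) (hz' : star z * z = star u * u)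
    (hqproj : q * q = q) (hqs : star q = q)
    (hq2 : q * (star u * u) = star u * u)
    (ε : ℝ)
    (hεb : ‖star z * b * z - star z * z * b - (star u * h * u - star u * u * h)‖ < ε) :
    ‖(h * (u * star u) - h * (star u * u)).trace‖
      ≤ ε * (q.trace).re + 2 * ‖b‖ * (q.rank : ℝ) := by
  set D := star z * b * z - star z * z * b - (star u * h * u - star u * u * h)
  have hustar := star_mul_mul_star_eq_star_of_mul_star_mul_eq hu
  have hqD : q * D = D := by
    have hzstar : star u * u * star z = star z := by
      rw [← hz', star_mul_mul_star_eq_star_of_mul_star_mul_eq hzz]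
    have hD : star u * u * D = D := by
      simp only [D, mul_sub, ← mul_assoc, hustar, hzstar]
    rw [← hD, ← mul_assoc, hq2]
  have htrD : D.trace = (star u * b * u).trace - (u * b * star u).trace
      - (h * (u * star u) - h * (star u * u)).trace := by
    have e1 : (star z * b * z).trace = (star u * b * u).trace := by
      rw [Matrix.trace_mul_cycle, hz, ← Matrix.trace_mul_cycle]
    have e2 : (star z * z * b).trace = (u * b * star u).trace := by
      rw [hz', Matrix.trace_mul_cycle u b]
    have e3 : (star u * h * u).trace = (h * (u * star u)).trace := by
      rw [Matrix.trace_mul_cycle, Matrix.trace_mul_comm]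
    simp only [D, Matrix.trace_sub, e1, e2, e3, Matrix.trace_mul_comm (star u * u) h]
  have hrank_u : ((star u * u).trace).re ≤ q.rank :=
    Matrix.re_trace_le_rank_of_mul_eq (by rw [IsIdempotentElem, ← mul_assoc, hustar]) hq2
  have hq_nonneg : 0 ≤ (q.trace).re := by
    simp [Matrix.trace_eq_rank_of_isIdempotentElem hqproj]
  have hb₁ := Matrix.norm_trace_conjTranspose_mul_mul_le u b
  have hb₂ := Matrix.norm_trace_mul_mul_conjTranspose_le u b
  have hDq := Matrix.norm_trace_le_of_isStarProjection_mul_eq ⟨hqproj, hqs⟩ hqD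
  rw [← Matrix.star_eq_conjTranspose] at hb₁ hb₂
  rw [RCLike.re_to_complex] at hb₁ hb₂ hDq
  calc _ = ‖(star u * b * u).trace - (u * b * star u).trace - D.trace‖ := by
        rw [htrD, sub_sub_cancel]
    _ ≤ ‖(star u * b * u).trace‖ + ‖(u * b * star u).trace‖ + ‖D.trace‖ :=
        norm_sub_le_of_le (norm_sub_le _ _) le_rfl
    _ ≤ ε * (q.trace).re + 2 * ‖b‖ * q.rank := by
        linarith [mul_le_mul_of_nonneg_left hrank_u (norm_nonneg b),
          mul_le_mul_of_nonneg_right hεb.le hq_nonneg]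

/-- Trace estimate: if `z` is a partial isometry with the same source and range projections as
the partial isometry `u`, `b` is selfadjoint commuting with `uu*` and `u*u`, `q` is the supremum
of the projections `uu*` and `u*u`, and `‖z*bz - z*zb - (u*hu - u*uh)‖ < ε`, then
`|Tr(h uu* - h u*u)| ≤ ε Tr(q) + 2‖b‖ rank(q)`. -/
theorem stmt_11 (n : ℕ) (h b u z q : Matrix (Fin n) (Fin n) ℂ)
    (hh : star h = h) (hb : star b = b)
    (hu : u * star u * u = u)
    (hbu : b * (u * star u) = (u * star u) * b)
    (hbu' : b * (star u * u) = (star u * u) * b)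
    (hzz : z * star z * z = z)
    (hz : z * star z = u * star u) (hz' : star z * z = star u * u)
    (hqproj : q * q = q) (hqs : star q = q)
    (hq1 : q * (u * star u) = u * star u) (hq2 : q * (star u * u) = star u * u)
    (hqmin : ∀ r : Matrix (Fin n) (Fin n) ℂ, r * r = r → star r = r →
      r * (u * star u) = u * star u → r * (star u * u) = star u * u → q * r = q)
    (ε : ℝ)
    (hεb : ‖star z * b * z - star z * z * b - (star u * h * u - star u * u * h)‖ < ε) :
    ‖(h * (u * star u) - h * (star u * u)).trace‖
      ≤ ε * (q.trace).re + 2 * ‖b‖ * (q.rank : ℝ) :=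
  stmt_11_general n h b u z q hu hzz hz hz' hqproj hqs hq2 ε hεb
end

section
/- Let $\alpha$ be a flow (strongly continuous one-parameter group of *-automorphisms) on a unital C*-algebra $A$ and $\omega$ an $\alpha$-KMS state at inverse temperature $\lambda > 0$. If $s \in A$ is an isometry ($s^* s = 1$) with $\alpha_t(s) = e^{it} s$, then $\omega(s s^*) = e^{-\lambda}$; in particular, if additionally $s s^* = 1$ then no such KMS state exists. -/
open scoped ComplexOrder

/-- If `ω` is a KMS state at inverse temperature `λ > 0` for a flow `α` and `s` is an isometry
with `α_t(s) = e^{it} s`, then `ω(ss*) = e^{-λ}`; in particular if also `ss* = 1` then no such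
KMS state exists. The KMS condition is encoded on eigenelements of the flow:
if `α_t(y) = e^{ipt} y` then `e^{-pλ} ω(xy) = ω(yx)`. -/
theorem stmt_12 {A : Type*} [CStarAlgebra A]
    (α : ℝ → A ≃⋆ₐ[ℂ] A)
    (ω : A →L[ℂ] ℂ) (hω1 : ω 1 = 1) (hωpos : ∀ a : A, 0 ≤ ω (star a * a))
    (lam : ℝ) (hlam : 0 < lam)
    (hKMS : ∀ (x y : A) (p : ℝ),
      (∀ t : ℝ, α t y = Complex.exp (Complex.I * (p : ℂ) * (t : ℂ)) • y) →
      ((Real.exp (-(p * lam)) : ℝ) : ℂ) * ω (x * y) = ω (y * x))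
    (s : A) (hs : star s * s = 1)
    (hαs : ∀ t : ℝ, α t s = Complex.exp (Complex.I * (t : ℂ)) • s) :
    ω (s * star s) = ((Real.exp (-lam) : ℝ) : ℂ) ∧ (s * star s = 1 → False) := by
  have key := hKMS (star s) s 1 (by simpa using hαs)
  rw [hs, hω1, mul_one, one_mul] at key
  refine ⟨key.symm, fun h => ?_⟩
  rw [h, hω1] at key
  have : Real.exp (-lam) = 1 := by exact_mod_cast key
  have := Real.exp_lt_one_iff.mpr (by linarith : -lam < 0)
  linarith
end
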